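/- arXiv:2307.04912 — 2 statements merged into one kernel-verified Lean document; each statement's English description precedes it below -/
import Mathlib

section
/- If x is a nonzero rational number with ν_p(x) < 0, then for every n ≥ 0, D_p^n(x) ≠ 0 and ν_p(D_p^n(x)) < 0. -/
/-- Arithmetic partial derivative with respect to the prime `p`. -/
noncomputable def Dp (p : ℕ) (x : ℚ) : ℚ :=
  if x = 0 then 0 else x * (padicValRat p x : ℚ) / p

/-! If `v = ν_p(x) < 0`, then `ν_p(D_p x) = v + ν_p(v) - 1`, and `ν_p(v) < |v| = -v` keeps this
below `-1`. So a negative valuation propagates along the orbit, and a negative valuation forces a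
nonzero value. -/

theorem Dp_eq (p : ℕ) (x : ℚ) : Dp p x = x * padicValRat p x / p := by
  by_cases hx : x = 0 <;> simp [Dp, hx]

theorem padicValInt_lt_natAbs (p : ℕ) {z : ℤ} (hz : z ≠ 0) :
    (padicValInt p z : ℤ) < z.natAbs :=
  Int.ofNat_lt.mpr (Nat.padicValNat_lt_self (Int.natAbs_ne_zero.mpr hz))

theorem padicValRat_Dp {p : ℕ} [Fact p.Prime] {x : ℚ} (hx : x ≠ 0)
    (hv : padicValRat p x ≠ 0) :
    padicValRat p (Dp p x) = padicValRat p x + padicValInt p (padicValRat p x) - 1 := by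
  have hp : (p : ℚ) ≠ 0 := Nat.cast_ne_zero.mpr (Fact.out : p.Prime).ne_zero
  have hvq : (padicValRat p x : ℚ) ≠ 0 := Int.cast_ne_zero.mpr hv
  rw [Dp_eq, padicValRat.div (mul_ne_zero hx hvq) hp, padicValRat.mul hx hvq,
    padicValRat.of_int, padicValRat.self (Fact.out : p.Prime).one_lt]

theorem padicValRat_Dp_neg {p : ℕ} [Fact p.Prime] {x : ℚ} (hneg : padicValRat p x < 0) :
    padicValRat p (Dp p x) < 0 := by
  have hx : x ≠ 0 := by rintro rfl; simp at hneg
  have hlt := padicValInt_lt_natAbs p hneg.ne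
  rw [padicValRat_Dp hx hneg.ne]
  omega

theorem dp_iter_ne_zero_of_neg_val_general (p : ℕ) (hp : p.Prime) (x : ℚ)
    (hneg : padicValRat p x < 0) :
    ∀ n : ℕ, (Dp p)^[n] x ≠ 0 ∧ padicValRat p ((Dp p)^[n] x) < 0 := by
  have := Fact.mk hp
  have hneg_iter (n : ℕ) : padicValRat p ((Dp p)^[n] x) < 0 :=
    Function.Iterate.rec (fun y => padicValRat p y < 0) hneg (fun _ => padicValRat_Dp_neg) n
  intro n
  refine ⟨fun h => ?_, hneg_iter n⟩
  simpa [h] using hneg_iter n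

theorem dp_iter_ne_zero_of_neg_val (p : ℕ) (hp : p.Prime) (x : ℚ) (hx : x ≠ 0)
    (hneg : padicValRat p x < 0) :
    ∀ n : ℕ, (Dp p)^[n] x ≠ 0 ∧ padicValRat p ((Dp p)^[n] x) < 0 :=
  dp_iter_ne_zero_of_neg_val_general p hp x hneg
end

section
/- If x is a nonzero rational number with ν_p(x) ≥ p, then for every n ≥ 0, ν_p(D_p^n(x)) ≥ p; in particular no iterate of D_p applied to x is a p-adic unit or zero. -/
namespace Dp

variable {p : ℕ} {x : ℚ}

theorem of_ne_zero (hx : x ≠ 0) : Dp p x = x * (padicValRat p x : ℚ) / p := if_neg hx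

theorem ne_zero [NeZero p] (hx : x ≠ 0) (hv : padicValRat p x ≠ 0) : Dp p x ≠ 0 := by
  rw [of_ne_zero hx]
  exact div_ne_zero (mul_ne_zero hx (Int.cast_ne_zero.mpr hv)) (NeZero.ne _)

theorem padicValRat_eq [Fact p.Prime] (hx : x ≠ 0) (hv : padicValRat p x ≠ 0) :
    padicValRat p (Dp p x) = padicValRat p x + padicValInt p (padicValRat p x) - 1 := by
  have hvq : (padicValRat p x : ℚ) ≠ 0 := Int.cast_ne_zero.mpr hv
  rw [of_ne_zero hx, padicValRat.div (mul_ne_zero hx hvq) (NeZero.ne _),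
    padicValRat.mul hx hvq, padicValRat.of_int, padicValRat.self (Fact.out : p.Prime).one_lt]

end Dp

theorem le_add_padicValInt_sub_one {p : ℕ} [Fact p.Prime] {v : ℤ} (hv : (p : ℤ) ≤ v) :
    (p : ℤ) ≤ v + padicValInt p v - 1 := by
  rcases hv.eq_or_lt with rfl | hlt
  · simp [padicValInt.self (Fact.out : p.Prime).one_lt]
  · omega

theorem mapsTo_Dp {p : ℕ} [Fact p.Prime] :
    Set.MapsTo (Dp p) {x | x ≠ 0 ∧ (p : ℤ) ≤ padicValRat p x}
      {x | x ≠ 0 ∧ (p : ℤ) ≤ padicValRat p x} := by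
  rintro x ⟨hx, hge⟩
  have hv : padicValRat p x ≠ 0 := by
    have := (Fact.out : p.Prime).pos
    omega
  exact ⟨Dp.ne_zero hx hv, Dp.padicValRat_eq hx hv ▸ le_add_padicValInt_sub_one hge⟩

theorem dp_iter_val_ge_p (p : ℕ) (hp : p.Prime) (x : ℚ) (hx : x ≠ 0)
    (hge : (p : ℤ) ≤ padicValRat p x) :
    ∀ n : ℕ, (Dp p)^[n] x ≠ 0 ∧ (p : ℤ) ≤ padicValRat p ((Dp p)^[n] x) := by
  have : Fact p.Prime := ⟨hp⟩
  exact fun n ↦ mapsTo_Dp.iterate n ⟨hx, hge⟩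
end
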